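/- Let f : ℤ → {0,1} be a weight diagram with n ≥ 1 black balls and c = f⁻¹(1). For every black-ball position i ∈ c, there exists an empty position j ∉ c with j < i such that i ∈ j⇢▼, i.e. r⁻(i,j) = 0 and r⁻(s,j) ≥ 0 for all j < s < i. (Every black ball is the target of at least one dashed arrow.) -/

import Mathlib

/-- The ±1 marker of a weight diagram `f : ℤ → {0,1}`: `g(i) = (-1)^(f(i)+1)`,
i.e. `1` on black balls and `-1` on empty positions. -/
def bg (f : ℤ → ℤ) (i : ℤ) : ℤ := if f i = 1 then 1 else -1

/-- `r⁺(i,j) = Σ_{s=j}^{i-1} g(s)`. -/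
noncomputable def rpl (f : ℤ → ℤ) (i j : ℤ) : ℤ := ∑ s ∈ Finset.Icc j (i - 1), bg f s

/-- `r⁻(i,j) = -Σ_{s=j+1}^{i} g(s)`. -/
noncomputable def rmi (f : ℤ → ℤ) (i j : ℤ) : ℤ := -∑ s ∈ Finset.Icc (j + 1) i, bg f s

/-- The set `⟵i▲(f)` of targets of solid arrows starting at position `i`:
`{j < i : r⁺(i,j) = 0 and r⁺(i,s) ≥ 0 for all j < s < i}`. -/
def solidT (f : ℤ → ℤ) (i : ℤ) : Set ℤ :=
  {j | j < i ∧ rpl f i j = 0 ∧ ∀ s, j < s → s < i → 0 ≤ rpl f i s}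

/-- The set `j⇢▼(f)` of targets of dashed arrows starting at position `j`:
`{i > j : r⁻(i,j) = 0 and r⁻(s,j) ≥ 0 for all j < s < i}`. -/
def dashT (f : ℤ → ℤ) (j : ℤ) : Set ℤ :=
  {i | j < i ∧ rmi f i j = 0 ∧ ∀ s, j < s → s < i → 0 ≤ rmi f s j}

/-- `f : ℤ → ℤ` is a weight diagram with `n` black balls: it takes values in `{0,1}`
and has exactly `n` positions with value `1`. -/
def IsWD (f : ℤ → ℤ) (n : ℕ) : Prop :=
  (∀ i, f i = 0 ∨ f i = 1) ∧ {i | f i = 1}.Finite ∧ {i | f i = 1}.ncard = n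

/-!
Put `R(j) = r⁻(i, j)`, so that `R(i) = 0` and `R(j) = R(j + 1) - g(j + 1)` moves in steps of `±1`.
Among the `2N + 1` positions ending at `i` at most `N` are black balls, so `R` is positive somewhere
to the left of `i`. If `j₀` is the last such position before `i`, then `R(j₀ + 1) = 0` and
`g(j₀ + 1) = -1`; since `g(i) = 1`, `j₀ + 1 < i`. By additivity
`r⁻(s, j₀ + 1) = R(j₀ + 1) - R(s) = -R(s) ≥ 0` for `j₀ + 1 < s < i`, so `i ∈ (j₀ + 1)⇢▼`.
-/

theorem rmi_eq_neg_sum_Ioc (f : ℤ → ℤ) (i j : ℤ) :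
    rmi f i j = -∑ s ∈ Finset.Ioc j i, bg f s := by
  rw [rmi, Finset.Icc_add_one_left_eq_Ioc]

theorem rmi_self (f : ℤ → ℤ) (i : ℤ) : rmi f i i = 0 := by
  simp [rmi_eq_neg_sum_Ioc]

theorem rmi_succ_left (f : ℤ → ℤ) (j : ℤ) : rmi f (j + 1) j = -bg f (j + 1) := by
  simp [rmi]

theorem rmi_add_rmi (f : ℤ → ℤ) {i j s : ℤ} (hjs : j ≤ s) (hsi : s ≤ i) :
    rmi f s j + rmi f i s = rmi f i j := by
  simp only [rmi_eq_neg_sum_Ioc, ← neg_add,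
    ← Finset.sum_union (Finset.Ioc_disjoint_Ioc_of_le le_rfl), Finset.Ioc_union_Ioc_eq_Ioc hjs hsi]

theorem bg_eq_one_or_neg_one (f : ℤ → ℤ) (s : ℤ) : bg f s = 1 ∨ bg f s = -1 := by
  unfold bg; split_ifs <;> simp

theorem sum_bg_eq (f : ℤ → ℤ) (t : Finset ℤ) :
    ∑ s ∈ t, bg f s = 2 * (t.filter (fun s => f s = 1)).card - t.card := by
  have hbg : ∀ s, bg f s = 2 * (if f s = 1 then 1 else 0) - 1 := by
    intro s; unfold bg; split_ifs <;> norm_num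
  simp only [hbg, Finset.sum_sub_distrib, ← Finset.mul_sum, Finset.sum_boole, Finset.sum_const,
    nsmul_eq_mul, mul_one]

theorem exists_rmi_pos_of_finite {f : ℤ → ℤ} (hfin : {s | f s = 1}.Finite) (i : ℤ) :
    ∃ j < i, 0 < rmi f i j := by
  set N := hfin.toFinset.card
  refine ⟨i - (2 * N + 1), by omega, ?_⟩
  have hcard : (Finset.Ioc (i - (2 * N + 1)) i).card = 2 * N + 1 := by
    rw [Int.card_Ioc]; omega
  have hblack : ((Finset.Ioc (i - (2 * N + 1)) i).filter (fun s => f s = 1)).card ≤ N :=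
    Finset.card_le_card fun s hs => by simpa using (Finset.mem_filter.mp hs).2
  rw [rmi_eq_neg_sum_Ioc, sum_bg_eq, hcard]
  omega

theorem exists_mem_dashT_of_finite {f : ℤ → ℤ} (hfin : {s | f s = 1}.Finite) {i : ℤ}
    (hi : f i = 1) : ∃ j, j < i ∧ f j ≠ 1 ∧ i ∈ dashT f j := by
  obtain ⟨j₀, ⟨hj₀i, hj₀pos⟩, hj₀max⟩ :=
    Int.exists_greatest_of_bdd (P := fun j => j < i ∧ 0 < rmi f i j)
      ⟨i, fun _ hj => hj.1.le⟩ (exists_rmi_pos_of_finite hfin i)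
  have hnonpos : ∀ s, j₀ < s → s ≤ i → rmi f i s ≤ 0 := by
    intro s hj₀s hsi
    rcases hsi.lt_or_eq with hsi | rfl
    · by_contra! h
      exact absurd (hj₀max s ⟨hsi, h⟩) (by omega)
    · exact (rmi_self f s).le
  have hstep := rmi_add_rmi f (Int.le_add_one le_rfl) hj₀i
  rw [rmi_succ_left] at hstep
  have hzero : rmi f i (j₀ + 1) = 0 := by
    have := hnonpos (j₀ + 1) (by omega) hj₀i
    have := bg_eq_one_or_neg_one f (j₀ + 1)
    omega
  have hempty : f (j₀ + 1) ≠ 1 := fun h => by simp [bg, h] at hstep; omega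
  have hlt : j₀ + 1 < i := lt_of_le_of_ne hj₀i fun h => hempty (h ▸ hi)
  refine ⟨j₀ + 1, hlt, hempty, hlt, hzero, fun s hs hsi => ?_⟩
  have := rmi_add_rmi f hs.le hsi.le
  have := hnonpos s (by omega) hsi.le
  omega

theorem stmt6_general (n : ℕ) (f : ℤ → ℤ) (hf : IsWD f n) (i : ℤ) (hi : f i = 1) :
    ∃ j, j < i ∧ f j ≠ 1 ∧ i ∈ dashT f j :=
  exists_mem_dashT_of_finite hf.2.1 hi

/-- In a weight diagram with `n ≥ 1` black balls, every black ball is the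
target of at least one dashed arrow: for every `i` with `f i = 1` there is an empty
position `j < i` with `i ∈ j⇢▼`. -/
theorem stmt6 (n : ℕ) (hn : 1 ≤ n) (f : ℤ → ℤ) (hf : IsWD f n) (i : ℤ) (hi : f i = 1) :
    ∃ j, j < i ∧ f j ≠ 1 ∧ i ∈ dashT f j :=
  stmt6_general n f hf i hi
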